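/- arXiv:2408.15832 — 3 statements merged into one kernel-verified Lean document; each statement's English description precedes it below -/
import Mathlib

section
/- Let H be a self-adjoint operator on a finite-dimensional Hilbert space with maximal eigenvalue degeneracy D_E, and suppose H has an orthonormal eigenbasis (φ_k) with ⟨φ_k, P φ_k⟩ ≤ ε for all k, where P is an orthogonal projection. Then every normalized eigenvector φ of H satisfies ⟨φ, P φ⟩ ≤ ε D_E. -/
open scoped InnerProductSpace

/-!
Write the eigenvector `φ` (eigenvalue `e`) in the eigenbasis: its coefficient along `b k` vanishes
unless `b k` also has eigenvalue `e`, and there are at most `D_E` such `k`, since these `b k` are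
linearly independent in the `e`-eigenspace. For an orthogonal projection `⟪x, P x⟫ = ‖P x‖²`,
so Cauchy–Schwarz over the surviving coefficients gives
`‖P φ‖² ≤ ‖φ‖² · ∑_{μ_k = e} ‖P (b k)‖² ≤ ε D_E`.
-/

open Finset RCLike

lemma LinearMap.IsSymmetric.re_inner_map_self_of_idempotent {𝕜 E : Type*} [RCLike 𝕜]
    [NormedAddCommGroup E] [InnerProductSpace 𝕜 E] {P : E →ₗ[𝕜] E} (hP : P.IsSymmetric)
    (hP2 : P ∘ₗ P = P) (x : E) : re ⟪x, P x⟫_𝕜 = ‖P x‖ ^ 2 := by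
  conv_lhs => rw [← LinearMap.congr_fun hP2 x, LinearMap.comp_apply, ← hP]
  exact inner_self_eq_norm_sq _

lemma Module.Basis.repr_map_of_apply_eq_smul {ι R M : Type*} [CommSemiring R] [AddCommMonoid M]
    [Module R M] (b : Module.Basis ι R M) {f : M →ₗ[R] M} {μ : ι → R}
    (hf : ∀ i, f (b i) = μ i • b i) (x : M) (k : ι) :
    b.repr (f x) k = μ k * b.repr x k := by
  have : b.coord k ∘ₗ f = μ k • b.coord k := b.ext fun i => by
    by_cases hik : i = k <;> simp [hf, hik]
  exact LinearMap.congr_fun this x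

lemma Module.Basis.repr_eq_zero_of_apply_eq_smul {ι K V : Type*} [Field K] [AddCommGroup V]
    [Module K V] (b : Module.Basis ι K V) {f : V →ₗ[K] V} {μ : ι → K}
    (hf : ∀ i, f (b i) = μ i • b i) {x : V} {e : K} (hx : f x = e • x) {k : ι}
    (hk : μ k ≠ e) : b.repr x k = 0 := by
  have h := b.repr_map_of_apply_eq_smul hf x k
  rw [hx, map_smul, Finsupp.smul_apply, smul_eq_mul] at h
  exact (mul_eq_zero.mp (by linear_combination h.symm : (μ k - e) * b.repr x k = 0)).resolve_left
    (sub_ne_zero.mpr hk)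

lemma LinearIndependent.card_le_finrank_of_forall_mem {ι K V : Type*} [DivisionRing K]
    [AddCommGroup V] [Module K V] [FiniteDimensional K V] {v : ι → V}
    (hv : LinearIndependent K v) (s : Finset ι) {W : Submodule K V} (hs : ∀ i ∈ s, v i ∈ W) :
    s.card ≤ Module.finrank K W := by
  have hvs : LinearIndependent K (fun i : s => v i) := hv.comp _ Subtype.val_injective
  rw [← Fintype.card_coe s, ← finrank_span_eq_card hvs]
  exact Submodule.finrank_mono (Submodule.span_le.mpr (Set.range_subset_iff.mpr fun i => hs i i.2))

lemma norm_sum_smul_sq_le {ι 𝕜 E : Type*} [RCLike 𝕜] [NormedAddCommGroup E] [NormedSpace 𝕜 E]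
    (s : Finset ι) (c : ι → 𝕜) (v : ι → E) :
    ‖∑ i ∈ s, c i • v i‖ ^ 2 ≤ (∑ i ∈ s, ‖c i‖ ^ 2) * ∑ i ∈ s, ‖v i‖ ^ 2 := by
  calc ‖∑ i ∈ s, c i • v i‖ ^ 2 ≤ (∑ i ∈ s, ‖c i‖ * ‖v i‖) ^ 2 := by
        gcongr
        exact (norm_sum_le _ _).trans_eq (sum_congr rfl fun i _ => norm_smul _ _)
    _ ≤ _ := sum_mul_sq_le_sq_mul_sq s _ _

lemma OrthonormalBasis.norm_map_sq_le_of_inner_eq_zero {ι 𝕜 E F : Type*} [Fintype ι] [RCLike 𝕜]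
    [NormedAddCommGroup E] [InnerProductSpace 𝕜 E] [NormedAddCommGroup F] [NormedSpace 𝕜 F]
    (b : OrthonormalBasis ι 𝕜 E) (T : E →ₗ[𝕜] F) {s : Finset ι} {x : E}
    (hx : ∀ i ∉ s, ⟪b i, x⟫_𝕜 = 0) :
    ‖T x‖ ^ 2 ≤ ‖x‖ ^ 2 * ∑ i ∈ s, ‖T (b i)‖ ^ 2 := by
  have hxs : x = ∑ i ∈ s, ⟪b i, x⟫_𝕜 • b i := by
    conv_lhs => rw [← b.sum_repr' x]
    exact (sum_subset (subset_univ s) fun i _ hi => by rw [hx i hi, zero_smul]).symm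
  have hcoeff : ∑ i ∈ s, ‖⟪b i, x⟫_𝕜‖ ^ 2 ≤ ‖x‖ ^ 2 :=
    (sum_le_univ_sum_of_nonneg fun _ => by positivity).trans_eq (b.sum_sq_norm_inner_right x)
  calc ‖T x‖ ^ 2 = ‖∑ i ∈ s, ⟪b i, x⟫_𝕜 • T (b i)‖ ^ 2 := by
        conv_lhs => rw [hxs, map_sum]
        simp only [map_smul]
    _ ≤ (∑ i ∈ s, ‖⟪b i, x⟫_𝕜‖ ^ 2) * ∑ i ∈ s, ‖T (b i)‖ ^ 2 := norm_sum_smul_sq_le s _ _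
    _ ≤ ‖x‖ ^ 2 * ∑ i ∈ s, ‖T (b i)‖ ^ 2 := by gcongr

theorem eigenvector_projection_bound_general (D : ℕ) (DE : ℕ) (ε : ℝ)
    (H₀ : EuclideanSpace ℂ (Fin D) →ₗ[ℂ] EuclideanSpace ℂ (Fin D))
    (hdeg : ∀ e : ℂ, Module.finrank ℂ (Module.End.eigenspace H₀ e) ≤ DE)
    (P : EuclideanSpace ℂ (Fin D) →ₗ[ℂ] EuclideanSpace ℂ (Fin D))
    (hP : P.IsSymmetric) (hP2 : P ∘ₗ P = P)
    (b : OrthonormalBasis (Fin D) ℂ (EuclideanSpace ℂ (Fin D)))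
    (heig : ∀ k : Fin D, ∃ e : ℂ, H₀ (b k) = e • b k)
    (hε : ∀ k : Fin D, (⟪b k, P (b k)⟫_ℂ).re ≤ ε) :
    ∀ (φ : EuclideanSpace ℂ (Fin D)) (e : ℂ), ‖φ‖ = 1 → H₀ φ = e • φ →
      (⟪φ, P φ⟫_ℂ).re ≤ ε * DE := by
  intro φ e hφ hφe
  choose μ hμ using heig
  have hPb k : ‖P (b k)‖ ^ 2 ≤ ε := (hP.re_inner_map_self_of_idempotent hP2 _).symm.trans_le (hε k)
  have : Nontrivial (EuclideanSpace ℂ (Fin D)) :=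
    nontrivial_of_ne φ 0 (norm_ne_zero_iff.mp (by simp [hφ]))
  obtain ⟨k₀⟩ := b.toBasis.index_nonempty
  have hε0 : 0 ≤ ε := (sq_nonneg _).trans (hPb k₀)
  let S := univ.filter fun k => μ k = e
  have hcard : S.card ≤ DE := (b.orthonormal.linearIndependent.card_le_finrank_of_forall_mem S
    fun k hk => Module.End.mem_eigenspace_iff.mpr ((mem_filter.mp hk).2 ▸ hμ k)).trans (hdeg e)
  have hsupp : ∀ k ∉ S, ⟪b k, φ⟫_ℂ = 0 := fun k hk => by
    rw [← b.repr_apply_apply, ← b.coe_toBasis_repr_apply]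
    exact b.toBasis.repr_eq_zero_of_apply_eq_smul (by simpa using hμ) hφe (by simpa [S] using hk)
  calc (⟪φ, P φ⟫_ℂ).re = ‖P φ‖ ^ 2 := hP.re_inner_map_self_of_idempotent hP2 φ
    _ ≤ ‖φ‖ ^ 2 * ∑ k ∈ S, ‖P (b k)‖ ^ 2 := b.norm_map_sq_le_of_inner_eq_zero P hsupp
    _ ≤ 1 * ∑ k ∈ S, ε := by rw [hφ, one_pow]; gcongr with k; exact hPb k
    _ ≤ ε * DE := by
      rw [one_mul, sum_const, nsmul_eq_mul, mul_comm]
      gcongr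

/-- If a self-adjoint operator `H₀` on `ℂ^D` has all eigenspace dimensions at most `D_E`
and possesses an orthonormal eigenbasis `(φ_k)` with `⟪φ_k, P φ_k⟫ ≤ ε` for an orthogonal
projection `P`, then every normalized eigenvector `φ` of `H₀` satisfies
`⟪φ, P φ⟫ ≤ ε * D_E`. -/
theorem eigenvector_projection_bound (D : ℕ) (DE : ℕ) (ε : ℝ)
    (H₀ : EuclideanSpace ℂ (Fin D) →ₗ[ℂ] EuclideanSpace ℂ (Fin D))
    (hH₀ : H₀.IsSymmetric)
    (hdeg : ∀ e : ℂ, Module.finrank ℂ (Module.End.eigenspace H₀ e) ≤ DE)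
    (P : EuclideanSpace ℂ (Fin D) →ₗ[ℂ] EuclideanSpace ℂ (Fin D))
    (hP : P.IsSymmetric) (hP2 : P ∘ₗ P = P)
    (b : OrthonormalBasis (Fin D) ℂ (EuclideanSpace ℂ (Fin D)))
    (heig : ∀ k : Fin D, ∃ e : ℂ, H₀ (b k) = e • b k)
    (hε : ∀ k : Fin D, (⟪b k, P (b k)⟫_ℂ).re ≤ ε) :
    ∀ (φ : EuclideanSpace ℂ (Fin D)) (e : ℂ), ‖φ‖ = 1 → H₀ φ = e • φ →
      (⟪φ, P φ⟫_ℂ).re ≤ ε * DE :=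
  eigenvector_projection_bound_general D DE ε H₀ hdeg P hP hP2 b heig hε
end

section
/- Let H be a self-adjoint operator on a D-dimensional Hilbert space with spectral projections Π_e, let P be an orthogonal projection with ⟨φ, Π_e P Π_e φ⟩ ≤ εδ ‖Π_e φ‖² for every eigenvalue e and every vector φ. Then for every unit vector ψ₀, the time average over [0,T] of ⟨ψ_t, P ψ_t⟩ (with ψ_t = e^{-iHt} ψ₀) converges as T → ∞ to Σ_e ⟨ψ₀, Π_e P Π_e ψ₀⟩, which is at most εδ. -/
/-!
Expanding `ψ₀` along the spectral projections, `⟪ψ_t, P ψ_t⟫` becomes the trigonometric polynomial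
`∑_{e,e'} exp(i(e - e')t) ⟪Π_e ψ₀, P Π_{e'} ψ₀⟫`. The time average of a nonzero frequency is
`O(1/T)`, and since the eigenvalues are distinct only the diagonal terms `e = e'` have frequency
zero; they are bounded by `εδ ∑_e ‖Π_e ψ₀‖² = εδ ‖ψ₀‖²`.
-/

open scoped InnerProductSpace
open MeasureTheory Filter

namespace CompleteOrthogonalIdempotents

variable {I A : Type*} [Fintype I] {e : I → A}

theorem sum_smul_pow {R : Type*} [CommSemiring R] [Semiring A] [Algebra R A]
    (he : CompleteOrthogonalIdempotents e) (c : I → R) (n : ℕ) :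
    (∑ i, c i • e i) ^ n = ∑ i, c i ^ n • e i := by
  classical
  induction n with
  | zero => simpa using he.complete.symm
  | succ n ih =>
    simp only [pow_succ, ih, Finset.sum_mul_sum, smul_mul_smul_comm, he.mul_eq, smul_ite,
      smul_zero, Finset.sum_ite_eq, Finset.mem_univ, if_true]

theorem exp_sum_smul {𝕂 : Type*} [RCLike 𝕂] [NormedRing A] [NormedAlgebra 𝕂 A] [CompleteSpace A]
    (he : CompleteOrthogonalIdempotents e) (c : I → 𝕂) :
    NormedSpace.exp (∑ i, c i • e i) = ∑ i, NormedSpace.exp (c i) • e i := by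
  have hsum (i : I) := NormedSpace.expSeries_summable' (𝕂 := 𝕂) (c i)
  simp only [NormedSpace.exp_eq_tsum 𝕂, he.sum_smul_pow, Finset.smul_sum, ← smul_assoc]
  rw [Summable.tsum_finsetSum fun i _ => (hsum i).smul_const (e i)]
  simp only [(hsum _).tsum_smul_const]

variable {E : Type*} [NormedAddCommGroup E] [CompleteSpace E]

theorem sum_norm_sq_apply {𝕜 : Type*} [RCLike 𝕜] [InnerProductSpace 𝕜 E] {p : I → E →L[𝕜] E}
    (hp : CompleteOrthogonalIdempotents p) (hsa : ∀ i, IsSelfAdjoint (p i)) (x : E) :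
    ∑ i, ‖p i x‖ ^ 2 = ‖x‖ ^ 2 := by
  have hnorm (i : I) : ‖p i x‖ ^ 2 = RCLike.re ⟪x, p i x⟫_𝕜 := by
    have hsymm : ⟪p i x, p i x⟫_𝕜 = ⟪x, p i (p i x)⟫_𝕜 := (hsa i).isSymmetric x (p i x)
    rw [← mul_apply_eq_comp, (hp.idem i).eq, inner_self_eq_norm_sq_to_K] at hsymm
    rw [← hsymm]
    norm_cast
  simp only [hnorm, ← map_sum, ← inner_sum, ← sum_apply, hp.complete, one_apply_eq_self,
    inner_self_eq_norm_sq]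

theorem inner_exp_apply_eq_sum [InnerProductSpace ℂ E] {p : I → E →L[ℂ] E}
    (hp : CompleteOrthogonalIdempotents p) (ω : I → ℝ) (A : E →L[ℂ] E) (x : E) (t : ℝ) :
    ⟪NormedSpace.exp ((-(t : ℂ) * Complex.I) • ∑ i, (ω i : ℂ) • p i) x,
        A (NormedSpace.exp ((-(t : ℂ) * Complex.I) • ∑ i, (ω i : ℂ) • p i) x)⟫_ℂ =
      ∑ ij : I × I,
        Complex.exp ((ω ij.1 - ω ij.2 : ℝ) * t * Complex.I) * ⟪p ij.1 x, A (p ij.2 x)⟫_ℂ := by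
  simp only [Finset.smul_sum, smul_smul, hp.exp_sum_smul, ← Complex.exp_eq_exp_ℂ, sum_apply,
    smul_apply, map_sum, map_smul, sum_inner, inner_sum, inner_smul_left, inner_smul_right,
    Fintype.sum_prod_type, Finset.mul_sum]
  rw [Finset.sum_comm]
  refine Finset.sum_congr rfl fun i _ => Finset.sum_congr rfl fun j _ => ?_
  rw [← Complex.exp_conj, mul_left_comm, ← mul_assoc, ← Complex.exp_add]
  congr 2
  simp only [map_mul, map_neg, Complex.conj_ofReal, Complex.conj_I, Complex.ofReal_sub]
  ring

end CompleteOrthogonalIdempotents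

noncomputable def timeAverage {F : Type*} [NormedAddCommGroup F] [NormedSpace ℝ F] (f : ℝ → F)
    (T : ℝ) : F :=
  T⁻¹ • ∫ t in (0 : ℝ)..T, f t

theorem timeAverage_re {f : ℝ → ℂ} (hf : Continuous f) (T : ℝ) :
    timeAverage (fun t => (f t).re) T = (timeAverage f T).re := by
  simp only [timeAverage, Complex.smul_re, smul_eq_mul]
  congr 1
  exact intervalIntegral.intervalIntegral_re (hf.intervalIntegrable 0 T)

theorem norm_integral_exp_mul_I_le {ω : ℝ} (hω : ω ≠ 0) (T : ℝ) :
    ‖∫ t in (0 : ℝ)..T, Complex.exp (ω * t * Complex.I)‖ ≤ 2 / |ω| := by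
  have hc : (ω : ℂ) * Complex.I ≠ 0 := mul_ne_zero (by exact_mod_cast hω) Complex.I_ne_zero
  simp_rw [mul_right_comm _ _ Complex.I]
  rw [integral_exp_mul_complex hc, norm_div, norm_mul, Complex.norm_I, mul_one,
    Complex.norm_real, Real.norm_eq_abs, Complex.ofReal_zero, mul_zero, Complex.exp_zero]
  gcongr
  calc ‖Complex.exp (ω * Complex.I * T) - 1‖ ≤ ‖Complex.exp (ω * Complex.I * T)‖ + ‖(1 : ℂ)‖ :=
        norm_sub_le _ _
    _ = 2 := by
        rw [mul_right_comm, ← Complex.ofReal_mul, Complex.norm_exp_ofReal_mul_I, norm_one]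
        norm_num

theorem tendsto_timeAverage_exp_mul_I (ω : ℝ) :
    Tendsto (timeAverage fun t => Complex.exp (ω * t * Complex.I)) atTop
      (nhds (if ω = 0 then 1 else 0)) := by
  split_ifs with hω
  · refine tendsto_const_nhds.congr' ?_
    filter_upwards [eventually_ne_atTop 0] with T hT
    simp [timeAverage, hω, hT]
  · refine squeeze_zero_norm' ?_ (by simpa using tendsto_inv_atTop_zero.mul_const (2 / |ω|))
    filter_upwards [eventually_gt_atTop 0] with T hT
    rw [timeAverage, norm_smul, norm_inv, Real.norm_of_nonneg hT.le]
    gcongr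
    exact norm_integral_exp_mul_I_le hω T

theorem tendsto_timeAverage_sum_exp_mul_I {ι : Type*} (s : Finset ι) (ω : ι → ℝ) (z : ι → ℂ) :
    Tendsto (timeAverage fun t => ∑ i ∈ s, Complex.exp (ω i * t * Complex.I) * z i) atTop
      (nhds (∑ i ∈ s with ω i = 0, z i)) := by
  have hav : timeAverage (fun t => ∑ i ∈ s, Complex.exp (ω i * t * Complex.I) * z i) =
      fun T => ∑ i ∈ s, timeAverage (fun t => Complex.exp (ω i * t * Complex.I)) T * z i := by
    ext1 T
    rw [timeAverage, intervalIntegral.integral_finsetSum fun i _ => by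
      exact (by fun_prop : Continuous _).intervalIntegrable _ _]
    simp only [Finset.smul_sum, intervalIntegral.integral_mul_const, timeAverage, smul_mul_assoc]
  rw [hav, Finset.sum_filter]
  refine tendsto_finsetSum s fun i _ => ?_
  simpa using (tendsto_timeAverage_exp_mul_I (ω i)).mul_const (z i)

theorem time_average_ETH_general (D : ℕ) (ε δ : ℝ)
    (ℰ : Finset ℝ)
    (Pr : ℝ → (EuclideanSpace ℂ (Fin D) →L[ℂ] EuclideanSpace ℂ (Fin D)))
    (hPrsa : ∀ e ∈ ℰ, IsSelfAdjoint (Pr e))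
    (hPridem : ∀ e ∈ ℰ, Pr e * Pr e = Pr e)
    (hProrth : ∀ e ∈ ℰ, ∀ e' ∈ ℰ, e ≠ e' → Pr e * Pr e' = 0)
    (hPrsum : ∑ e ∈ ℰ, Pr e = 1)
    (H : EuclideanSpace ℂ (Fin D) →L[ℂ] EuclideanSpace ℂ (Fin D))
    (hH : H = ∑ e ∈ ℰ, (e : ℂ) • Pr e)
    (P : EuclideanSpace ℂ (Fin D) →L[ℂ] EuclideanSpace ℂ (Fin D))
    (hbound : ∀ e ∈ ℰ, ∀ φ : EuclideanSpace ℂ (Fin D),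
      (⟪φ, (Pr e * P * Pr e) φ⟫_ℂ).re ≤ ε * δ * ‖Pr e φ‖ ^ 2)
    (ψ₀ : EuclideanSpace ℂ (Fin D)) (hψ₀ : ‖ψ₀‖ = 1) :
    Tendsto
      (fun T : ℝ => T⁻¹ * ∫ t in (0:ℝ)..T,
        (⟪NormedSpace.exp ((-(t : ℂ) * Complex.I) • H) ψ₀,
          P (NormedSpace.exp ((-(t : ℂ) * Complex.I) • H) ψ₀)⟫_ℂ).re)
      atTop
      (nhds (∑ e ∈ ℰ, (⟪ψ₀, (Pr e * P * Pr e) ψ₀⟫_ℂ).re)) ∧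
    (∑ e ∈ ℰ, (⟪ψ₀, (Pr e * P * Pr e) ψ₀⟫_ℂ).re) ≤ ε * δ := by
  classical
  set p : ℰ → EuclideanSpace ℂ (Fin D) →L[ℂ] EuclideanSpace ℂ (Fin D) := fun e => Pr e
  have hp : CompleteOrthogonalIdempotents p :=
    { idem := fun e => hPridem e e.2
      ortho := fun e e' hne => hProrth e e.2 e' e'.2 (Subtype.coe_injective.ne hne)
      complete := by rw [Finset.sum_coe_sort ℰ Pr, hPrsum] }
  have hH' : H = ∑ e : ℰ, ((e : ℝ) : ℂ) • p e := by
    rw [hH, Finset.sum_coe_sort ℰ fun e => (e : ℂ) • Pr e]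
  have hdiag : ∑ ij : ℰ × ℰ with (ij.1 : ℝ) - ij.2 = 0, ⟪p ij.1 ψ₀, P (p ij.2 ψ₀)⟫_ℂ =
      ∑ e ∈ ℰ, ⟪ψ₀, (Pr e * P * Pr e) ψ₀⟫_ℂ := by
    simp only [Finset.sum_filter, Fintype.sum_prod_type, sub_eq_zero, Subtype.coe_inj,
      Finset.sum_ite_eq, Finset.mem_univ, if_true]
    rw [← Finset.sum_coe_sort ℰ]
    exact Finset.sum_congr rfl fun e _ => (hPrsa e e.2).isSymmetric ψ₀ (P (Pr e ψ₀))
  refine ⟨?_, ?_⟩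
  · rw [← Complex.re_sum, ← hdiag]
    refine ((Complex.continuous_re.tendsto _).comp
      (tendsto_timeAverage_sum_exp_mul_I Finset.univ _ _)).congr fun T => ?_
    simp_rw [hH', hp.inner_exp_apply_eq_sum]
    exact (timeAverage_re (by fun_prop) T).symm
  · calc ∑ e ∈ ℰ, (⟪ψ₀, (Pr e * P * Pr e) ψ₀⟫_ℂ).re
        ≤ ∑ e ∈ ℰ, ε * δ * ‖Pr e ψ₀‖ ^ 2 := Finset.sum_le_sum fun e he => hbound e he ψ₀
      _ = ε * δ := by
        rw [← Finset.mul_sum, ← Finset.sum_coe_sort, hp.sum_norm_sq_apply fun e => hPrsa e e.2,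
          hψ₀, one_pow, mul_one]

/-- For a Hermitian `H` with spectral decomposition `H = Σ_e e • Pr_e` and an orthogonal
projection `P` satisfying `⟪φ, Pr_e P Pr_e φ⟫ ≤ εδ ‖Pr_e φ‖²` for all `e` and `φ`, the time
average over `[0,T]` of `⟪ψ_t, P ψ_t⟫` (with `ψ_t = e^{-iHt} ψ₀`, `ψ₀` a unit vector)
converges as `T → ∞` to `Σ_e ⟪ψ₀, Pr_e P Pr_e ψ₀⟫`, which is at most `εδ`. -/
theorem time_average_ETH (D : ℕ) (ε δ : ℝ) (hε : 0 < ε) (hδ : 0 < δ)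
    (ℰ : Finset ℝ)
    (Pr : ℝ → (EuclideanSpace ℂ (Fin D) →L[ℂ] EuclideanSpace ℂ (Fin D)))
    (hPrsa : ∀ e ∈ ℰ, IsSelfAdjoint (Pr e))
    (hPridem : ∀ e ∈ ℰ, Pr e * Pr e = Pr e)
    (hProrth : ∀ e ∈ ℰ, ∀ e' ∈ ℰ, e ≠ e' → Pr e * Pr e' = 0)
    (hPrsum : ∑ e ∈ ℰ, Pr e = 1)
    (H : EuclideanSpace ℂ (Fin D) →L[ℂ] EuclideanSpace ℂ (Fin D))
    (hH : H = ∑ e ∈ ℰ, (e : ℂ) • Pr e)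
    (P : EuclideanSpace ℂ (Fin D) →L[ℂ] EuclideanSpace ℂ (Fin D))
    (hPsa : IsSelfAdjoint P) (hPidem : P * P = P)
    (hbound : ∀ e ∈ ℰ, ∀ φ : EuclideanSpace ℂ (Fin D),
      (⟪φ, (Pr e * P * Pr e) φ⟫_ℂ).re ≤ ε * δ * ‖Pr e φ‖ ^ 2)
    (ψ₀ : EuclideanSpace ℂ (Fin D)) (hψ₀ : ‖ψ₀‖ = 1) :
    Tendsto
      (fun T : ℝ => T⁻¹ * ∫ t in (0:ℝ)..T,
        (⟪NormedSpace.exp ((-(t : ℂ) * Complex.I) • H) ψ₀,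
          P (NormedSpace.exp ((-(t : ℂ) * Complex.I) • H) ψ₀)⟫_ℂ).re)
      atTop
      (nhds (∑ e ∈ ℰ, (⟪ψ₀, (Pr e * P * Pr e) ψ₀⟫_ℂ).re)) ∧
    (∑ e ∈ ℰ, (⟪ψ₀, (Pr e * P * Pr e) ψ₀⟫_ℂ).re) ≤ ε * δ :=
  time_average_ETH_general D ε δ ℰ Pr hPrsa hPridem hProrth hPrsum H hH P hbound ψ₀ hψ₀
end

section
/- For the free Fermi gas eigenstate Ψ_k with distinct momenta and any λ ∈ (0,1], ⟨Ψ_k, e^{λ N_Γ} Ψ_k⟩ ≤ (μ e^λ + (1−μ))^N, where μ = |Γ|/|Λ|. -/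
open scoped InnerProductSpace Real

/-- `k·x` for a momentum `k ∈ ℝ^d` and a lattice site `x ∈ {1,…,L}^d`. -/
def kdot (d L : ℕ) (k : Fin d → ℝ) (x : Fin d → Fin L) : ℝ :=
  ∑ a : Fin d, k a * ((x a : ℕ) + 1)

/-- The creation operator `a†_k := L^{-d/2} Σ_{x∈Λ} e^{ik·x} c†_x`. -/
noncomputable def adagL (d L : ℕ) {H : Type*} [NormedAddCommGroup H]
    [InnerProductSpace ℂ H] (cd : (Fin d → Fin L) → (H →L[ℂ] H)) (k : Fin d → ℝ) :
    H →L[ℂ] H :=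
  ((Real.sqrt ((L : ℝ) ^ d) : ℂ))⁻¹ •
    ∑ x : Fin d → Fin L, Complex.exp (Complex.I * kdot d L k x) • cd x

/-- Membership in the discrete momentum lattice `𝒦`. -/
def inMomentumLattice (d L : ℕ) (k : Fin d → ℝ) : Prop :=
  ∀ a : Fin d, (∃ ν : ℤ, k a = 2 * π * ν / L) ∧ -π < k a ∧ k a ≤ π


/-!
Write `N_Γ = Σ_{x∈Γ} c†_x c_x` and `S = exp((λ/2) N_Γ)`. The CAR give
`N_Γ c†_y = c†_y (N_Γ + 1_Γ(y))`, so `S a†_k = b†_k S`, where `b†_k` is `a†_k` with its plane wave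
multiplied by `e^{λ/2}` on `Γ`; and `S` fixes the vacuum. As `S` is self-adjoint,
`⟨Ψ_k, e^{λ N_Γ} Ψ_k⟩ = ‖S Ψ_k‖² = ‖b†_{k_1} ⋯ b†_{k_N} Φ_vac‖²`. Again by the CAR,
`b_k b†_k + b†_k b_k` is the squared `ℓ²`-norm of the wave function of `b†_k`, namely
`μ e^λ + (1 - μ)`; hence `‖b†_k φ‖² ≤ (μ e^λ + 1 - μ) ‖φ‖²`, and there are `N` factors.
-/

theorem NormedSpace.exp_mul_of_mul_eq_mul_add_smul_one {𝕂 𝔸 : Type*} [RCLike 𝕂] [NormedRing 𝔸]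
    [NormedAlgebra 𝕂 𝔸] [CompleteSpace 𝔸] {a b : 𝔸} {s : 𝕂}
    (h : a * b = b * (a + s • 1)) : exp a * b = exp s • (b * exp a) := by
  let _ : NormedAlgebra ℚ 𝔸 := NormedAlgebra.restrictScalars ℚ 𝕂 𝔸
  have hsemi : SemiconjBy b (a + s • 1) a := h.symm
  rw [← hsemi.exp_right.eq, ← Algebra.algebraMap_eq_smul_one,
    exp_add_of_commute (Algebra.commutes s a).symm, ← algebraMap_exp_comm,
    Algebra.algebraMap_eq_smul_one, mul_smul_comm, mul_one, mul_smul_comm]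

theorem semiconjBy_list_prod_ofFn {M : Type*} [Monoid M] {a : M} {n : ℕ} {f g : Fin n → M}
    (h : ∀ i, SemiconjBy a (f i) (g i)) :
    SemiconjBy a (List.ofFn f).prod (List.ofFn g).prod := by
  induction n with
  | zero => simp
  | succ n ih =>
    simpa only [List.ofFn_succ, List.prod_cons] using (h 0).mul_right (ih fun i => h i.succ)

namespace ContinuousLinearMap

variable {𝕜 E : Type*} [RCLike 𝕜] [NormedAddCommGroup E]

theorem exp_apply_of_apply_eq_zero [NormedSpace 𝕜 E] [CompleteSpace E] {T : E →L[𝕜] E} {v : E}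
    (h : T v = 0) : NormedSpace.exp T v = v := by
  have hterm : ∀ n ≠ 0, ((n.factorial⁻¹ : 𝕜) • T ^ n) v = 0 := by
    intro n hn
    obtain ⟨m, rfl⟩ := Nat.exists_eq_succ_of_ne_zero hn
    rw [smul_apply, pow_succ, mul_apply_eq_comp, h, map_zero, smul_zero]
  have hv : HasSum (fun n : ℕ => ((n.factorial⁻¹ : 𝕜) • T ^ n) v) v := by
    convert hasSum_single 0 hterm
    simp
  exact ((NormedSpace.exp_series_hasSum_exp' (𝕂 := 𝕜) T).mapL (apply 𝕜 E v)).unique hv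

theorem norm_list_prod_ofFn_apply_sq_le [NormedSpace 𝕜 E] {M : ℝ} (hM : 0 ≤ M) {n : ℕ}
    {f : Fin n → E →L[𝕜] E} (hf : ∀ i x, ‖f i x‖ ^ 2 ≤ M * ‖x‖ ^ 2) (v : E) :
    ‖(List.ofFn f).prod v‖ ^ 2 ≤ M ^ n * ‖v‖ ^ 2 := by
  induction n with
  | zero => simp
  | succ n ih =>
    calc ‖(List.ofFn f).prod v‖ ^ 2 = ‖f 0 ((List.ofFn fun i => f i.succ).prod v)‖ ^ 2 := by
          rw [List.ofFn_succ, List.prod_cons, mul_apply_eq_comp]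
      _ ≤ M * (M ^ n * ‖v‖ ^ 2) :=
          (hf 0 _).trans (mul_le_mul_of_nonneg_left (ih fun i => hf i.succ) hM)
      _ = M ^ (n + 1) * ‖v‖ ^ 2 := by ring

variable [InnerProductSpace 𝕜 E] [CompleteSpace E]

theorem norm_apply_sq_le_of_adjoint_mul_add (A : E →L[𝕜] E) {M : ℝ}
    (h : adjoint A * A + A * adjoint A = (M : 𝕜) • 1) (x : E) :
    ‖A x‖ ^ 2 ≤ M * ‖x‖ ^ 2 := by
  have hAA : adjoint A (A x) = (M : 𝕜) • x - A (adjoint A x) := by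
    rw [eq_sub_iff_add_eq]
    simpa using congr($h x)
  have hnorm : ‖A x‖ ^ 2 = M * ‖x‖ ^ 2 - ‖adjoint A x‖ ^ 2 := by
    rw [A.apply_norm_sq_eq_inner_adjoint_right, coe_comp, Function.comp_apply, hAA,
      inner_sub_right, inner_smul_right, ← adjoint_inner_left, inner_self_eq_norm_sq_to_K,
      inner_self_eq_norm_sq_to_K, ← RCLike.ofReal_pow, ← RCLike.ofReal_pow,
      ← RCLike.ofReal_mul, ← RCLike.ofReal_sub, RCLike.ofReal_re]
  nlinarith [sq_nonneg ‖adjoint A x‖]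

theorem _root_.IsSelfAdjoint.re_inner_exp_smul_apply_self {T : E →L[𝕜] E} (hT : IsSelfAdjoint T)
    (r : ℝ) (x : E) :
    RCLike.re ⟪x, NormedSpace.exp ((r : 𝕜) • T) x⟫_𝕜 =
      ‖NormedSpace.exp (((r / 2 : ℝ) : 𝕜) • T) x‖ ^ 2 := by
  let _ : NormedAlgebra ℚ (E →L[𝕜] E) := NormedAlgebra.restrictScalars ℚ 𝕜 _
  have hS : IsSelfAdjoint (NormedSpace.exp (((r / 2 : ℝ) : 𝕜) • T)) :=
    (IsSelfAdjoint.smul (RCLike.conj_ofReal _) hT).exp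
  have hsplit : (r : 𝕜) • T = ((r / 2 : ℝ) : 𝕜) • T + ((r / 2 : ℝ) : 𝕜) • T := by
    rw [← add_smul, ← RCLike.ofReal_add, add_halves]
  rw [hsplit, NormedSpace.exp_add_of_commute (Commute.refl _), mul_apply_eq_comp,
    ← adjoint_inner_left, hS.adjoint_eq, inner_self_eq_norm_sq]

end ContinuousLinearMap

section CAR

variable {X H : Type*} [NormedAddCommGroup H] [InnerProductSpace ℂ H] [CompleteSpace H]

noncomputable def numberOp (c cd : X → H →L[ℂ] H) (Γ : Finset X) : H →L[ℂ] H :=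
  ∑ x ∈ Γ, cd x * c x

noncomputable def creationOp [Fintype X] (cd : X → H →L[ℂ] H) (w : X → ℂ) : H →L[ℂ] H :=
  ∑ x, w x • cd x

variable {c cd : X → H →L[ℂ] H}

theorem star_eq_of_forall_eq_adjoint (hadj : ∀ x, cd x = ContinuousLinearMap.adjoint (c x))
    (x : X) : star (c x) = cd x := by
  rw [ContinuousLinearMap.star_eq_adjoint, hadj]

theorem isSelfAdjoint_numberOp (hadj : ∀ x, cd x = ContinuousLinearMap.adjoint (c x))
    (Γ : Finset X) : IsSelfAdjoint (numberOp c cd Γ) := by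
  refine isSelfAdjoint_sum Γ fun x _ => ?_
  simpa only [star_eq_of_forall_eq_adjoint hadj] using IsSelfAdjoint.star_mul_self (c x)

theorem cd_mul_cd_add_cd_mul_cd (hadj : ∀ x, cd x = ContinuousLinearMap.adjoint (c x))
    (hcc : ∀ x y, c x * c y + c y * c x = 0) (x y : X) :
    cd x * cd y + cd y * cd x = 0 := by
  simpa [star_mul, star_eq_of_forall_eq_adjoint hadj, add_comm] using congr(star $(hcc y x))

theorem exp_smul_numberOp_apply (Γ : Finset X) (z : ℂ) {v : H} (hv : ∀ x, c x v = 0) :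
    NormedSpace.exp (z • numberOp c cd Γ) v = v :=
  ContinuousLinearMap.exp_apply_of_apply_eq_zero <| by simp [numberOp, hv]

theorem adjoint_creationOp [Fintype X] (hadj : ∀ x, cd x = ContinuousLinearMap.adjoint (c x))
    (w : X → ℂ) :
    ContinuousLinearMap.adjoint (creationOp cd w) = ∑ x, starRingEnd ℂ (w x) • c x := by
  simp [creationOp, ← ContinuousLinearMap.star_eq_adjoint, hadj]

variable [DecidableEq X]

theorem numberOp_mul_cd (hadj : ∀ x, cd x = ContinuousLinearMap.adjoint (c x))
    (hcc : ∀ x y, c x * c y + c y * c x = 0)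
    (hccd : ∀ x y, c x * cd y + cd y * c x = if x = y then (1 : H →L[ℂ] H) else 0)
    (Γ : Finset X) (y : X) :
    numberOp c cd Γ * cd y = cd y * (numberOp c cd Γ + (if y ∈ Γ then 1 else 0 : ℂ) • 1) := by
  have hterm : ∀ x, cd x * c x * cd y = cd y * (cd x * c x) + if x = y then cd y else 0 := by
    intro x
    calc cd x * c x * cd y = cd x * (c x * cd y + cd y * c x)
            - (cd x * cd y + cd y * cd x) * c x + cd y * (cd x * c x) := by noncomm_ring
      _ = cd y * (cd x * c x) + if x = y then cd y else 0 := by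
          rw [hccd, cd_mul_cd_add_cd_mul_cd hadj hcc, add_comm]
          split_ifs with hxy <;> simp [hxy]
  simp only [numberOp, Finset.sum_mul, hterm, Finset.sum_add_distrib, Finset.sum_ite_eq',
    ← Finset.mul_sum, mul_add, ite_smul, one_smul, zero_smul, mul_one, mul_ite, mul_zero]

theorem exp_smul_numberOp_mul_cd (hadj : ∀ x, cd x = ContinuousLinearMap.adjoint (c x))
    (hcc : ∀ x y, c x * c y + c y * c x = 0)
    (hccd : ∀ x y, c x * cd y + cd y * c x = if x = y then (1 : H →L[ℂ] H) else 0)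
    (Γ : Finset X) (z : ℂ) (y : X) :
    NormedSpace.exp (z • numberOp c cd Γ) * cd y =
      (if y ∈ Γ then Complex.exp z else 1) • (cd y * NormedSpace.exp (z • numberOp c cd Γ)) := by
  have hcomm : z • numberOp c cd Γ * cd y =
      cd y * (z • numberOp c cd Γ + (if y ∈ Γ then z else 0) • 1) := by
    rw [smul_mul_assoc, numberOp_mul_cd hadj hcc hccd, mul_add, mul_add, smul_add,
      mul_smul_comm, mul_smul_comm, mul_smul_comm, smul_smul, mul_ite, mul_one, mul_zero]
  rw [NormedSpace.exp_mul_of_mul_eq_mul_add_smul_one hcomm, ← Complex.exp_eq_exp_ℂ,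
    apply_ite Complex.exp, Complex.exp_zero]

variable [Fintype X]

theorem exp_smul_numberOp_mul_creationOp (hadj : ∀ x, cd x = ContinuousLinearMap.adjoint (c x))
    (hcc : ∀ x y, c x * c y + c y * c x = 0)
    (hccd : ∀ x y, c x * cd y + cd y * c x = if x = y then (1 : H →L[ℂ] H) else 0)
    (Γ : Finset X) (z : ℂ) (w : X → ℂ) :
    NormedSpace.exp (z • numberOp c cd Γ) * creationOp cd w =
      creationOp cd (fun x => (if x ∈ Γ then Complex.exp z else 1) * w x) *
        NormedSpace.exp (z • numberOp c cd Γ) := by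
  simp only [creationOp, Finset.mul_sum, Finset.sum_mul, mul_smul_comm, smul_mul_assoc,
    exp_smul_numberOp_mul_cd hadj hcc hccd, smul_smul, mul_comm]

theorem exp_smul_numberOp_list_prod_apply (hadj : ∀ x, cd x = ContinuousLinearMap.adjoint (c x))
    (hcc : ∀ x y, c x * c y + c y * c x = 0)
    (hccd : ∀ x y, c x * cd y + cd y * c x = if x = y then (1 : H →L[ℂ] H) else 0)
    (Γ : Finset X) (z : ℂ) {n : ℕ} (w : Fin n → X → ℂ) {v : H} (hv : ∀ x, c x v = 0) :
    NormedSpace.exp (z • numberOp c cd Γ) ((List.ofFn fun j => creationOp cd (w j)).prod v) =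
      (List.ofFn fun j =>
        creationOp cd (fun x => (if x ∈ Γ then Complex.exp z else 1) * w j x)).prod v := by
  rw [← mul_apply_eq_comp, (semiconjBy_list_prod_ofFn fun j =>
      exp_smul_numberOp_mul_creationOp hadj hcc hccd Γ z (w j)).eq,
    mul_apply_eq_comp, exp_smul_numberOp_apply Γ z hv]

theorem norm_creationOp_apply_sq_le (hadj : ∀ x, cd x = ContinuousLinearMap.adjoint (c x))
    (hccd : ∀ x y, c x * cd y + cd y * c x = if x = y then (1 : H →L[ℂ] H) else 0)
    (w : X → ℂ) (φ : H) :
    ‖creationOp cd w φ‖ ^ 2 ≤ (∑ x, ‖w x‖ ^ 2) * ‖φ‖ ^ 2 := by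
  refine (creationOp cd w).norm_apply_sq_le_of_adjoint_mul_add ?_ φ
  calc _ = ∑ x, ∑ y, (starRingEnd ℂ (w x) * w y) • (c x * cd y + cd y * c x) := by
        rw [adjoint_creationOp hadj, creationOp, Finset.sum_mul_sum, Finset.sum_mul_sum,
          Finset.sum_comm (s := Finset.univ) (t := Finset.univ) (f := fun y x => (w y • cd y) * _)]
        simp only [← Finset.sum_add_distrib, smul_add, smul_mul_smul_comm, mul_comm]
    _ = ∑ x, ((‖w x‖ ^ 2 : ℝ) : ℂ) • (1 : H →L[ℂ] H) := by simp [hccd, Complex.conj_mul']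
    _ = _ := by rw [← Finset.sum_smul]; push_cast; rfl

end CAR

section Lattice

variable {d L : ℕ}

noncomputable def planeWave (d L : ℕ) (k : Fin d → ℝ) (x : Fin d → Fin L) : ℂ :=
  ((Real.sqrt ((L : ℝ) ^ d) : ℂ))⁻¹ * Complex.exp (Complex.I * kdot d L k x)

theorem adagL_eq_creationOp {H : Type*} [NormedAddCommGroup H] [InnerProductSpace ℂ H]
    (cd : (Fin d → Fin L) → (H →L[ℂ] H)) (k : Fin d → ℝ) :
    adagL d L cd k = creationOp cd (planeWave d L k) := by
  simp only [adagL, creationOp, planeWave, Finset.smul_sum, smul_smul]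

theorem sum_norm_sq_ite_mul_planeWave (hL : 0 < L) (Γ : Finset (Fin d → Fin L))
    (k : Fin d → ℝ) (t : ℝ) :
    ∑ x, ‖(if x ∈ Γ then Complex.exp t else 1) * planeWave d L k x‖ ^ 2 =
      (Γ.card : ℝ) / (L : ℝ) ^ d * Real.exp (2 * t) + (1 - (Γ.card : ℝ) / (L : ℝ) ^ d) := by
  have hLd : (0 : ℝ) < (L : ℝ) ^ d := by positivity
  have hterm : ∀ x, ‖(if x ∈ Γ then Complex.exp t else 1) * planeWave d L k x‖ ^ 2 =
      ((L : ℝ) ^ d)⁻¹ * (1 + if x ∈ Γ then Real.exp (2 * t) - 1 else 0) := by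
    intro x
    rw [planeWave, norm_mul, norm_mul, norm_inv, Complex.norm_exp_I_mul_ofReal, Complex.norm_real,
      Real.norm_of_nonneg (Real.sqrt_nonneg _), mul_one, mul_pow, inv_pow, Real.sq_sqrt hLd.le]
    split_ifs
    · rw [Complex.norm_exp_ofReal, ← Real.exp_nat_mul]
      ring_nf
    · simp
  rw [Finset.sum_congr rfl fun x _ => hterm x, ← Finset.mul_sum, Finset.sum_add_distrib,
    Finset.sum_ite_mem, Finset.univ_inter, Finset.sum_const, Finset.sum_const, Finset.card_univ,
    Fintype.card_fun, Fintype.card_fin, Fintype.card_fin]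
  field_simp
  ring

end Lattice

theorem exp_moment_bound_general (d L N : ℕ) (hL : 0 < L)
    {H : Type*} [NormedAddCommGroup H] [InnerProductSpace ℂ H] [CompleteSpace H]
    (c cd : (Fin d → Fin L) → (H →L[ℂ] H))
    (hadj : ∀ x, cd x = ContinuousLinearMap.adjoint (c x))
    (hcc : ∀ x y, c x * c y + c y * c x = 0)
    (hccd : ∀ x y, c x * cd y + cd y * c x = if x = y then (1 : H →L[ℂ] H) else 0)
    (vac : H) (hvac : ‖vac‖ = 1) (hvac0 : ∀ x, c x vac = 0)
    (k : Fin N → (Fin d → ℝ))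
    (Γ : Finset (Fin d → Fin L)) (lam : ℝ) :
    (⟪(List.ofFn fun j => adagL d L cd (k j)).prod vac,
        (NormedSpace.exp ((lam : ℂ) • ∑ x ∈ Γ, cd x * c x))
          ((List.ofFn fun j => adagL d L cd (k j)).prod vac)⟫_ℂ).re ≤
      (((Γ.card : ℝ) / (L : ℝ) ^ d) * Real.exp lam +
        (1 - (Γ.card : ℝ) / (L : ℝ) ^ d)) ^ N := by
  set M := ((Γ.card : ℝ) / (L : ℝ) ^ d) * Real.exp lam + (1 - (Γ.card : ℝ) / (L : ℝ) ^ d)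
  have hM : ∀ q, ∑ x, ‖(if x ∈ Γ then Complex.exp (lam / 2 : ℝ) else 1) * planeWave d L q x‖ ^ 2
      = M := fun q => by rw [sum_norm_sq_ite_mul_planeWave hL, mul_div_cancel₀ _ two_ne_zero]
  change RCLike.re ⟪_, NormedSpace.exp ((lam : ℂ) • numberOp c cd Γ) _⟫_ℂ ≤ M ^ N
  simp only [adagL_eq_creationOp]
  rw [← RCLike.ofReal_eq_complex_ofReal,
    (isSelfAdjoint_numberOp hadj Γ).re_inner_exp_smul_apply_self, RCLike.ofReal_eq_complex_ofReal,
    exp_smul_numberOp_list_prod_apply hadj hcc hccd Γ _ _ hvac0]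
  calc _ ≤ M ^ N * ‖vac‖ ^ 2 :=
        ContinuousLinearMap.norm_list_prod_ofFn_apply_sq_le (hM 0 ▸ by positivity)
          (fun j φ => hM (k j) ▸ norm_creationOp_apply_sq_le hadj hccd _ φ) vac
    _ = M ^ N := by rw [hvac, one_pow, mul_one]

/-- Exponential moment bound for the free Fermi gas eigenstate: for any `λ ∈ (0,1]`,
`⟨Ψ_k, e^{λ N_Γ} Ψ_k⟩ ≤ (μ e^λ + (1−μ))^N` with `μ = |Γ|/|Λ|`. -/
theorem exp_moment_bound (d L N : ℕ) (hL : 0 < L)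
    {H : Type*} [NormedAddCommGroup H] [InnerProductSpace ℂ H] [CompleteSpace H]
    (c cd : (Fin d → Fin L) → (H →L[ℂ] H))
    (hadj : ∀ x, cd x = ContinuousLinearMap.adjoint (c x))
    (hcc : ∀ x y, c x * c y + c y * c x = 0)
    (hccd : ∀ x y, c x * cd y + cd y * c x = if x = y then (1 : H →L[ℂ] H) else 0)
    (vac : H) (hvac : ‖vac‖ = 1) (hvac0 : ∀ x, c x vac = 0)
    (k : Fin N → (Fin d → ℝ)) (hk : Function.Injective k)
    (hkK : ∀ j, inMomentumLattice d L (k j))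
    (Γ : Finset (Fin d → Fin L)) (lam : ℝ) (hlam : lam ∈ Set.Ioc (0:ℝ) 1) :
    (⟪(List.ofFn fun j => adagL d L cd (k j)).prod vac,
        (NormedSpace.exp ((lam : ℂ) • ∑ x ∈ Γ, cd x * c x))
          ((List.ofFn fun j => adagL d L cd (k j)).prod vac)⟫_ℂ).re ≤
      (((Γ.card : ℝ) / (L : ℝ) ^ d) * Real.exp lam +
        (1 - (Γ.card : ℝ) / (L : ℝ) ^ d)) ^ N :=
  exp_moment_bound_general d L N hL c cd hadj hcc hccd vac hvac hvac0 k Γ lam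
end
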